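/- arXiv:2202.00144 — 2 statements merged into one kernel-verified Lean document; each statement's English description precedes it below -/
import Mathlib

section
/- Let (Ω, τ_Ω) be a probability space, P a finite-dimensional subspace of L²(Ω, τ_Ω) consisting of (pointwise-defined) functions, w : Ω → [0,∞) a weight function, y_1, …, y_M points of Ω, and define the discrete seminorm ‖g‖_disc = sqrt((1/M) Σ_{i=1}^M w(y_i) |g(y_i)|²). Suppose the norm equivalence (1−δ) ‖p‖²_{L²(Ω,τ_Ω)} ≤ (1/M) Σ_{i=1}^M w(y_i)|p(y_i)|² ≤ (1+δ) ‖p‖²_{L²(Ω,τ_Ω)} holds for every p ∈ P, where 0 < δ < 1. Then for any f ∈ L²(Ω,τ_Ω) whose values f(y_i) are defined, the weighted least-squares problem min_{p∈P} (1/M) Σ_{i=1}^M w(y_i)|f(y_i) − p(y_i)|² has a unique minimizer f̃ ∈ P, and f̃ satisfies ‖f − f̃‖_{L²(Ω,τ_Ω)} ≤ inf_{p∈P} { ‖f − p‖_{L²(Ω,τ_Ω)} + (1−δ)^{−1/2} ‖f − p‖_disc }. -/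
open MeasureTheory Finset

/-- The `L²(Ω,τ)` norm `‖g‖ = sqrt (∫ ‖g‖² dτ)` of a pointwise-defined function. -/
noncomputable def L2Norm {Ω : Type*} [MeasurableSpace Ω] (τ : Measure Ω) (g : Ω → ℂ) : ℝ :=
  Real.sqrt (∫ x, ‖g x‖ ^ 2 ∂τ)

/-- The squared discrete seminorm `(1/M) ∑_{i=1}^M w(y_i) ‖g(y_i)‖²`. -/
noncomputable def discSq {Ω : Type*} {M : ℕ} (w : Ω → ℝ) (y : Fin M → Ω) (g : Ω → ℂ) : ℝ :=
  (1 / (M : ℝ)) * ∑ i, w (y i) * ‖g (y i)‖ ^ 2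

/-- The discrete seminorm `‖g‖_disc = sqrt ((1/M) ∑_{i=1}^M w(y_i) ‖g(y_i)‖²)`. -/
noncomputable def discNorm {Ω : Type*} {M : ℕ} (w : Ω → ℝ) (y : Fin M → Ω) (g : Ω → ℂ) : ℝ :=
  Real.sqrt (discSq w y g)

/-- The sampling map `g ↦ (√w(y_i) · g(y_i))_i` as a linear map to Euclidean space. -/
noncomputable def Tmap {Ω : Type*} (w : Ω → ℝ) {M : ℕ} (y : Fin M → Ω) :
    (Ω → ℂ) →ₗ[ℂ] EuclideanSpace ℂ (Fin M) where
  toFun g := WithLp.toLp 2 (fun i => (Real.sqrt (w (y i)) : ℂ) * g (y i))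
  map_add' g h := by ext i; simp [mul_add]
  map_smul' c g := by ext i; simp; ring

lemma discSq_eq_norm {Ω : Type*} (w : Ω → ℝ) (hw : ∀ x, 0 ≤ w x) {M : ℕ} (y : Fin M → Ω)
    (g : Ω → ℂ) :
    discSq w y g = (1 / (M : ℝ)) * ‖Tmap w y g‖ ^ 2 := by
  unfold discSq
  congr 1
  rw [EuclideanSpace.norm_eq, Real.sq_sqrt (by positivity)]
  refine Finset.sum_congr rfl fun i _ => ?_
  simp only [Tmap, LinearMap.coe_mk, AddHom.coe_mk, PiLp.toLp_apply, norm_mul, Complex.norm_real,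
    Real.norm_eq_abs, abs_of_nonneg (Real.sqrt_nonneg _), mul_pow,
    Real.sq_sqrt (hw (y i))]

lemma L2Norm_eq_eLpNorm {Ω : Type*} [MeasurableSpace Ω] (τ : Measure Ω) (g : Ω → ℂ)
    (hg : MemLp g 2 τ) :
    L2Norm τ g = (eLpNorm g 2 τ).toReal := by
  unfold L2Norm
  rw [hg.eLpNorm_eq_integral_rpow_norm two_ne_zero ENNReal.ofNat_ne_top,
    ENNReal.toReal_ofReal (by positivity)]
  norm_num [Real.sqrt_eq_rpow]

/-- Under the norm equivalence
`(1−δ)‖p‖² ≤ (1/M)∑ w(y_i)|p(y_i)|² ≤ (1+δ)‖p‖²` for all `p ∈ P`, the weighted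
least-squares problem has a unique (as an element of `L²`) minimizer `f̃ ∈ P`, and
`‖f − f̃‖ ≤ inf_{p ∈ P} { ‖f − p‖ + (1−δ)^{−1/2} ‖f − p‖_disc }`. -/
theorem stmt0 {Ω : Type*} [MeasurableSpace Ω] (τ : Measure Ω) [IsProbabilityMeasure τ]
    (P : Submodule ℂ (Ω → ℂ)) [FiniteDimensional ℂ P]
    (hP : ∀ p ∈ P, MemLp p 2 τ)
    (w : Ω → ℝ) (hw : ∀ x, 0 ≤ w x) {M : ℕ} (y : Fin M → Ω)
    (δ : ℝ) (hδ0 : 0 < δ) (hδ1 : δ < 1)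
    (hequiv : ∀ p ∈ P,
      (1 - δ) * (L2Norm τ p) ^ 2 ≤ discSq w y p ∧
        discSq w y p ≤ (1 + δ) * (L2Norm τ p) ^ 2)
    (f : Ω → ℂ) (hf : MemLp f 2 τ) :
    ∃ ftilde ∈ P,
      (∀ p ∈ P, discSq w y (f - ftilde) ≤ discSq w y (f - p)) ∧
      (∀ g ∈ P, (∀ p ∈ P, discSq w y (f - g) ≤ discSq w y (f - p)) →
        L2Norm τ (g - ftilde) = 0) ∧
      (∀ p ∈ P,
        L2Norm τ (f - ftilde) ≤
          L2Norm τ (f - p) + (1 - δ) ^ (-(1 : ℝ) / 2) * discNorm w y (f - p)) := by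
  classical
  set T : (Ω → ℂ) →ₗ[ℂ] EuclideanSpace ℂ (Fin M) := Tmap w y with hT
  set S : Submodule ℂ (EuclideanSpace ℂ (Fin M)) := P.map T with hS
  set b : EuclideanSpace ℂ (Fin M) := T f with hb
  set s0 : EuclideanSpace ℂ (Fin M) := (S.orthogonalProjection b : EuclideanSpace ℂ (Fin M))
    with hs0
  have hs0S : s0 ∈ S := (S.orthogonalProjection b).2
  obtain ⟨ft, hftP, hfts⟩ := Submodule.mem_map.mp hs0S
  have horth : b - s0 ∈ Sᗮ := Submodule.sub_starProjection_mem_orthogonal (K := S) b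
  have h1δ : (0 : ℝ) < 1 - δ := by linarith
  -- Pythagoras
  have hpyth : ∀ p ∈ P, discSq w y (f - p) = discSq w y (f - ft) + discSq w y (p - ft) := by
    intro p hp
    have hin : (inner ℂ (b - s0) (s0 - T p) : ℂ) = 0 := by
      refine (Submodule.mem_orthogonal' S _).mp horth _ ?_
      exact Submodule.sub_mem S hs0S (Submodule.mem_map_of_mem hp)
    have hnorm : ‖T (f - p)‖ ^ 2 = ‖T (f - ft)‖ ^ 2 + ‖T (p - ft)‖ ^ 2 := by
      have h1 : T (f - p) = (b - s0) + (s0 - T p) := by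
        rw [map_sub]; abel
      have h2 : T (f - ft) = b - s0 := by rw [map_sub, hfts]
      have h3 : T (p - ft) = T p - s0 := by rw [map_sub, hfts]
      rw [h1, h2, h3, pow_two, pow_two, pow_two,
        norm_add_sq_eq_norm_sq_add_norm_sq_of_inner_eq_zero _ _ hin,
        norm_sub_rev s0 (T p)]
    rw [discSq_eq_norm w hw y (f - p), discSq_eq_norm w hw y (f - ft),
      discSq_eq_norm w hw y (p - ft), hnorm, mul_add]
  have hd0 : ∀ g : Ω → ℂ, 0 ≤ discSq w y g := by
    intro g
    rw [discSq_eq_norm w hw y]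
    positivity
  refine ⟨ft, hftP, ?_, ?_, ?_⟩
  · -- minimality
    intro p hp
    have := hd0 (p - ft)
    rw [hpyth p hp]
    linarith
  · -- uniqueness in L²
    intro g hg hgmin
    have h1 : discSq w y (g - ft) ≤ 0 := by
      have := hgmin ft hftP
      rw [hpyth g hg] at this
      linarith [hd0 (f - ft)]
    have h2 := (hequiv (g - ft) (Submodule.sub_mem P hg hftP)).1
    have h3 : (0 : ℝ) ≤ L2Norm τ (g - ft) := Real.sqrt_nonneg _
    have hsq : (L2Norm τ (g - ft)) ^ 2 ≤ 0 := by nlinarith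
    have : (L2Norm τ (g - ft)) ^ 2 = 0 := le_antisymm hsq (sq_nonneg _)
    exact pow_eq_zero_iff two_ne_zero |>.mp this
  · -- near-best approximation
    intro p hp
    have hfp : MemLp (f - p) 2 τ := hf.sub (hP p hp)
    have hpf : MemLp (p - ft) 2 τ := (hP p hp).sub (hP ft hftP)
    have hfft : MemLp (f - ft) 2 τ := hf.sub (hP ft hftP)
    have tri : L2Norm τ (f - ft) ≤ L2Norm τ (f - p) + L2Norm τ (p - ft) := by
      have hkey : f - ft = (f - p) + (p - ft) := (sub_add_sub_cancel f p ft).symm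
      rw [L2Norm_eq_eLpNorm τ _ hfft, L2Norm_eq_eLpNorm τ _ hfp, L2Norm_eq_eLpNorm τ _ hpf,
        ← ENNReal.toReal_add hfp.2.ne hpf.2.ne]
      refine ENNReal.toReal_mono (ENNReal.add_ne_top.mpr ⟨hfp.2.ne, hpf.2.ne⟩) ?_
      calc eLpNorm (f - ft) 2 τ = eLpNorm ((f - p) + (p - ft)) 2 τ := by rw [hkey]
        _ ≤ _ := eLpNorm_add_le hfp.1 hpf.1 one_le_two
    have hdisc : discSq w y (p - ft) ≤ discSq w y (f - p) := by
      rw [hpyth p hp]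
      linarith [hd0 (f - ft)]
    have h2 := (hequiv (p - ft) (Submodule.sub_mem P hp hftP)).1
    have hL2 : (L2Norm τ (p - ft)) ^ 2 ≤ (1 - δ)⁻¹ * discSq w y (f - p) := by
      rw [le_inv_mul_iff₀ h1δ]
      linarith
    have hsqrt := Real.sqrt_le_sqrt hL2
    rw [Real.sqrt_sq (show (0:ℝ) ≤ L2Norm τ (p - ft) from Real.sqrt_nonneg _),
      Real.sqrt_mul (by positivity)] at hsqrt
    have hrp : (1 - δ) ^ (-(1 : ℝ) / 2) = Real.sqrt ((1 - δ)⁻¹) := by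
      rw [neg_div, Real.rpow_neg h1δ.le, ← Real.sqrt_eq_rpow, Real.sqrt_inv]
    rw [hrp]
    calc L2Norm τ (f - ft) ≤ L2Norm τ (f - p) + L2Norm τ (p - ft) := tri
      _ ≤ L2Norm τ (f - p) + Real.sqrt ((1 - δ)⁻¹) * Real.sqrt (discSq w y (f - p)) := by
          linarith [hsqrt]
      _ = _ := by rw [discNorm]
end

section
/- Let (Ω, τ_Ω) be a probability space, P a finite-dimensional subspace of L²(Ω, τ_Ω) consisting of pointwise-defined functions, w : Ω → [0,∞) a weight function, y_1, …, y_M points of Ω, and define the discrete seminorm ‖g‖_disc = sqrt((1/M) Σ_{i=1}^M w(y_i) |g(y_i)|²). Define the discrete stability constant α = inf { ‖p‖_disc : p ∈ P, ‖p‖_{L²(Ω,τ_Ω)} = 1 } and suppose α > 0. Let f ∈ L²(Ω,τ_Ω) with defined values f(y_i), let e_1,…,e_M be noise values, and let f̃ ∈ P be a minimizer of (1/M) Σ_{i=1}^M w(y_i)|f(y_i) + e_i − p(y_i)|² over p ∈ P. Then f̃ is the unique minimizer, and for every p ∈ P, ‖f − f̃‖_{L²(Ω,τ_Ω)} ≤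 ‖f − p‖_{L²(Ω,τ_Ω)} + α^{−1} ‖f − p‖_disc + α^{−1} ‖e‖_w, where ‖e‖_w = sqrt((1/M) Σ_{i=1}^M w(y_i)|e_i|²). -/
open MeasureTheory Finset

open scoped InnerProductSpace ENNReal

/-- Auxiliary: the coordinatewise embedding of `Fin M → ℂ` into Euclidean space. -/
noncomputable def sampVec {M : ℕ} (u : Fin M → ℂ) : EuclideanSpace ℂ (Fin M) :=
  (WithLp.equiv 2 (Fin M → ℂ)).symm u

lemma sampVec_sub {M : ℕ} (u v : Fin M → ℂ) : sampVec u - sampVec v = sampVec (u - v) := by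
  simp [sampVec]

lemma sampVec_add {M : ℕ} (u v : Fin M → ℂ) : sampVec u + sampVec v = sampVec (u + v) := by
  simp [sampVec]

lemma sampVec_smul {M : ℕ} (a : ℂ) (u : Fin M → ℂ) : a • sampVec u = sampVec (a • u) := by
  simp [sampVec]

lemma normSq_sampVec {M : ℕ} (u : Fin M → ℂ) : ‖sampVec u‖ ^ 2 = ∑ i, ‖u i‖ ^ 2 := by
  rw [sampVec, EuclideanSpace.norm_eq, Real.sq_sqrt (by positivity)]
  simp [WithLp.equiv_symm_apply, PiLp.toLp_apply]

/-- Auxiliary: the weighted sampling operator into Euclidean space. -/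
noncomputable def sampT {Ω : Type*} {M : ℕ} (c : Fin M → ℝ) (y : Fin M → Ω) :
    (Ω → ℂ) →ₗ[ℂ] EuclideanSpace ℂ (Fin M) where
  toFun g := sampVec (fun i => (c i : ℂ) * g (y i))
  map_add' a b := by
    rw [sampVec_add]
    refine congrArg sampVec ?_
    funext i
    simp [mul_add]
  map_smul' a g := by
    rw [RingHom.id_apply, sampVec_smul]
    refine congrArg sampVec ?_
    funext i
    simp only [Pi.smul_apply, smul_eq_mul]
    ring

lemma sampT_eq {Ω : Type*} {M : ℕ} (c : Fin M → ℝ) (y : Fin M → Ω) (g : Ω → ℂ) :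
    sampT c y g = sampVec (fun i => (c i : ℂ) * g (y i)) := rfl

/-- If the discrete stability constant
`α = inf { ‖p‖_disc : p ∈ P, ‖p‖_{L²} = 1 }` is positive, then any minimizer `f̃ ∈ P` of
the noisy weighted least-squares functional is the unique minimizer (as an element of `L²`)
and satisfies `‖f − f̃‖ ≤ ‖f − p‖ + α⁻¹ ‖f − p‖_disc + α⁻¹ ‖e‖_w` for all `p ∈ P`. -/
theorem stmt1 {Ω : Type*} [MeasurableSpace Ω] (τ : Measure Ω) [IsProbabilityMeasure τ]
    (P : Submodule ℂ (Ω → ℂ)) [FiniteDimensional ℂ P]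
    (hP : ∀ p ∈ P, MemLp p 2 τ)
    (w : Ω → ℝ) (hw : ∀ x, 0 ≤ w x) {M : ℕ} (y : Fin M → Ω)
    (α : ℝ) (hα_def : α = sInf {t | ∃ p ∈ P, L2Norm τ p = 1 ∧ t = discNorm w y p})
    (hα : 0 < α)
    (f : Ω → ℂ) (hf : MemLp f 2 τ) (e : Fin M → ℂ)
    (ftilde : Ω → ℂ) (hft : ftilde ∈ P)
    (hmin : ∀ p ∈ P,
      (1 / (M : ℝ)) * ∑ i, w (y i) * ‖f (y i) + e i - ftilde (y i)‖ ^ 2 ≤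
        (1 / (M : ℝ)) * ∑ i, w (y i) * ‖f (y i) + e i - p (y i)‖ ^ 2) :
    (∀ g ∈ P, (∀ p ∈ P,
        (1 / (M : ℝ)) * ∑ i, w (y i) * ‖f (y i) + e i - g (y i)‖ ^ 2 ≤
          (1 / (M : ℝ)) * ∑ i, w (y i) * ‖f (y i) + e i - p (y i)‖ ^ 2) →
      L2Norm τ (g - ftilde) = 0) ∧
    (∀ p ∈ P,
      L2Norm τ (f - ftilde) ≤
        L2Norm τ (f - p) + α⁻¹ * discNorm w y (f - p) +
          α⁻¹ * Real.sqrt ((1 / (M : ℝ)) * ∑ i, w (y i) * ‖e i‖ ^ 2)) := by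
  classical
  obtain ⟨c, hc⟩ : ∃ c : Fin M → ℝ, c = fun i => Real.sqrt (w (y i) / M) := ⟨_, rfl⟩
  have hc0 : ∀ i, 0 ≤ c i := fun i => hc ▸ Real.sqrt_nonneg _
  have hcsq : ∀ i, c i ^ 2 = w (y i) / M := fun i => by
    rw [hc]; exact Real.sq_sqrt (div_nonneg (hw _) (Nat.cast_nonneg _))
  obtain ⟨T, hT⟩ : ∃ T : (Ω → ℂ) →ₗ[ℂ] EuclideanSpace ℂ (Fin M), T = sampT c y := ⟨_, rfl⟩
  have hkey : ∀ u : Fin M → ℂ,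
      ‖sampVec (fun i => (c i : ℂ) * u i)‖ ^ 2
        = (1 / (M : ℝ)) * ∑ i, w (y i) * ‖u i‖ ^ 2 := by
    intro u
    rw [normSq_sampVec, Finset.mul_sum]
    refine Finset.sum_congr rfl fun i _ => ?_
    rw [norm_mul, Complex.norm_real, Real.norm_eq_abs, abs_of_nonneg (hc0 i), mul_pow, hcsq]
    field_simp
  have hTnorm : ∀ g : Ω → ℂ,
      ‖T g‖ ^ 2 = (1 / (M : ℝ)) * ∑ i, w (y i) * ‖g (y i)‖ ^ 2 := by
    intro g
    rw [hT, sampT_eq]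
    exact hkey _
  have hdisc : ∀ g : Ω → ℂ, discNorm w y g = ‖T g‖ := by
    intro g
    rw [discNorm, discSq, ← hTnorm g, Real.sqrt_sq (norm_nonneg _)]
  -- the data vector
  obtain ⟨b, hb⟩ : ∃ b : EuclideanSpace ℂ (Fin M),
      b = sampVec (fun i => (c i : ℂ) * (f (y i) + e i)) := ⟨_, rfl⟩
  have hfun : ∀ p : Ω → ℂ,
      (1 / (M : ℝ)) * ∑ i, w (y i) * ‖f (y i) + e i - p (y i)‖ ^ 2 = ‖b - T p‖ ^ 2 := by
    intro p
    have hsub : b - T p = sampVec (fun i => (c i : ℂ) * (f (y i) + e i - p (y i))) := by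
      rw [hb, hT, sampT_eq, sampVec_sub]
      refine congrArg sampVec ?_
      funext i
      simp only [Pi.sub_apply]
      ring
    rw [hsub, hkey]
  -- orthogonality relations for any minimizer
  have horthoAll : ∀ h, h ∈ P → (∀ p ∈ P,
        (1 / (M : ℝ)) * ∑ i, w (y i) * ‖f (y i) + e i - h (y i)‖ ^ 2 ≤
          (1 / (M : ℝ)) * ∑ i, w (y i) * ‖f (y i) + e i - p (y i)‖ ^ 2) →
      ∀ q ∈ P, ⟪b - T h, T q⟫_ℂ = 0 := by
    intro h hh hhmin q hq
    have hmem : T h ∈ P.map T := Submodule.mem_map_of_mem hh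
    have hiInf : ‖b - T h‖ = ⨅ v : P.map T, ‖b - v‖ := by
      apply le_antisymm
      · refine le_ciInf ?_
        rintro ⟨v, q', hq', rfl⟩
        have h1 := hhmin q' hq'
        rw [hfun h, hfun q'] at h1
        exact (pow_le_pow_iff_left₀ (norm_nonneg _) (norm_nonneg _) two_ne_zero).mp h1
      · have hbdd : BddBelow (Set.range fun v : P.map T =>
            ‖b - (v : EuclideanSpace ℂ (Fin M))‖) := by
          refine ⟨0, ?_⟩
          rintro x ⟨v, rfl⟩
          exact norm_nonneg _
        exact ciInf_le hbdd ⟨T h, hmem⟩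
    exact (Submodule.norm_eq_iInf_iff_inner_eq_zero (P.map T) hmem).mp hiInf (T q)
      (Submodule.mem_map_of_mem hq)
  -- stability: α * ‖p‖_{L²} ≤ ‖p‖_disc for p ∈ P
  have hL2smul : ∀ (a : ℂ) (g : Ω → ℂ), L2Norm τ (a • g) = ‖a‖ * L2Norm τ g := by
    intro a g
    rw [L2Norm, L2Norm]
    have hpt : ∀ x, ‖(a • g) x‖ ^ 2 = ‖a‖ ^ 2 * ‖g x‖ ^ 2 := by
      intro x
      show ‖a * g x‖ ^ 2 = _
      rw [norm_mul, mul_pow]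
    simp_rw [hpt, MeasureTheory.integral_const_mul]
    rw [Real.sqrt_mul (sq_nonneg _), Real.sqrt_sq (norm_nonneg _)]
  have hstab : ∀ p ∈ P, α * L2Norm τ p ≤ discNorm w y p := by
    intro p hp
    rcases eq_or_ne (L2Norm τ p) 0 with h0 | h0
    · rw [h0, mul_zero]
      exact Real.sqrt_nonneg _
    · have hn : 0 < L2Norm τ p := lt_of_le_of_ne (Real.sqrt_nonneg _) (Ne.symm h0)
      set n := L2Norm τ p
      have hq : ((n : ℂ))⁻¹ • p ∈ P := P.smul_mem _ hp
      have hnC : ‖((n : ℝ) : ℂ)⁻¹‖ = n⁻¹ := by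
        rw [norm_inv, Complex.norm_real, Real.norm_eq_abs, abs_of_pos hn]
      have hqnorm : L2Norm τ (((n : ℂ))⁻¹ • p) = 1 := by
        rw [hL2smul, hnC, inv_mul_cancel₀ hn.ne']
      have hbdd : BddBelow {t | ∃ p ∈ P, L2Norm τ p = 1 ∧ t = discNorm w y p} := by
        refine ⟨0, ?_⟩
        rintro t ⟨p', _, _, rfl⟩
        exact Real.sqrt_nonneg _
      have h1 : α ≤ discNorm w y (((n : ℂ))⁻¹ • p) := by
        rw [hα_def]
        exact csInf_le hbdd ⟨_, hq, hqnorm, rfl⟩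
      have h2 : discNorm w y (((n : ℂ))⁻¹ • p) = n⁻¹ * discNorm w y p := by
        rw [hdisc, hdisc, T.map_smul, norm_smul, hnC]
      rw [h2] at h1
      have h3 := mul_le_mul_of_nonneg_right h1 hn.le
      have h4 : n⁻¹ * discNorm w y p * n = discNorm w y p := by
        field_simp
      linarith
  -- L² triangle inequality via Lp seminorms
  have hL2eq : ∀ g : Ω → ℂ, MemLp g 2 τ → L2Norm τ g = (eLpNorm g 2 τ).toReal := by
    intro g hg
    rw [hg.eLpNorm_eq_integral_rpow_norm two_ne_zero ENNReal.ofNat_ne_top,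
      ENNReal.toReal_ofReal (by positivity), L2Norm]
    have h2 : ((2 : ℝ≥0∞)).toReal = (2 : ℝ) := by simp
    rw [h2]
    have hint : (∫ a, ‖g a‖ ^ (2 : ℝ) ∂τ) = ∫ x, ‖g x‖ ^ 2 ∂τ := by
      simp_rw [Real.rpow_two]
    rw [hint, Real.sqrt_eq_rpow]
    norm_num
  have htri : ∀ g1 g2 : Ω → ℂ, MemLp g1 2 τ → MemLp g2 2 τ →
      L2Norm τ (g1 + g2) ≤ L2Norm τ g1 + L2Norm τ g2 := by
    intro g1 g2 h1 h2
    rw [hL2eq _ (h1.add h2), hL2eq _ h1, hL2eq _ h2,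
      ← ENNReal.toReal_add h1.eLpNorm_ne_top h2.eLpNorm_ne_top]
    exact ENNReal.toReal_mono
      (ENNReal.add_ne_top.2 ⟨h1.eLpNorm_ne_top, h2.eLpNorm_ne_top⟩)
      (eLpNorm_add_le h1.aestronglyMeasurable h2.aestronglyMeasurable one_le_two)
  constructor
  · -- uniqueness
    intro g hg hgmin
    have h1 := horthoAll ftilde hft hmin (g - ftilde) (P.sub_mem hg hft)
    have h2 := horthoAll g hg hgmin (g - ftilde) (P.sub_mem hg hft)
    have h3 : ⟪T (g - ftilde), T (g - ftilde)⟫_ℂ = 0 := by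
      have hsplit : T (g - ftilde) = (b - T ftilde) - (b - T g) := by
        rw [map_sub]; abel
      nth_rewrite 1 [hsplit]
      rw [inner_sub_left, h1, h2, sub_zero]
    have h4 : T (g - ftilde) = 0 := inner_self_eq_zero.mp h3
    have h5 : discNorm w y (g - ftilde) = 0 := by rw [hdisc, h4, norm_zero]
    have h6 := hstab _ (P.sub_mem hg hft)
    rw [h5] at h6
    have h7 : 0 ≤ L2Norm τ (g - ftilde) := Real.sqrt_nonneg _
    nlinarith
  · -- error bound
    intro p hp
    have hortho := horthoAll ftilde hft hmin
    -- step A : ‖T p - T ftilde‖ ≤ ‖T p - b‖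
    have hA : ‖T p - T ftilde‖ ≤ ‖T p - b‖ := by
      set v : EuclideanSpace ℂ (Fin M) := T p - T ftilde with hv
      have hvP : v = T (p - ftilde) := by rw [hv, map_sub]
      have h0 : ⟪b - T ftilde, v⟫_ℂ = 0 := by
        rw [hvP]; exact hortho _ (P.sub_mem hp hft)
      have h1 : ‖v‖ ^ 2 = RCLike.re (⟪v, T p - b⟫_ℂ) := by
        have hsum : ⟪v, v⟫_ℂ = ⟪v, T p - b⟫_ℂ + ⟪v, b - T ftilde⟫_ℂ := by
          rw [← inner_add_right]
          congr 1
          rw [hv]; abel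
        have h2 : ⟪v, b - T ftilde⟫_ℂ = 0 := by
          rw [← inner_conj_symm, h0, map_zero]
        rw [h2, add_zero] at hsum
        rw [← inner_self_eq_norm_sq (𝕜 := ℂ), hsum]
      have h3 : RCLike.re (⟪v, T p - b⟫_ℂ) ≤ ‖v‖ * ‖T p - b‖ :=
        le_trans (RCLike.re_le_norm _) (norm_inner_le_norm _ _)
      rcases eq_or_ne (‖v‖) 0 with hz | hz
      · rw [hz]
        exact norm_nonneg _
      · have hvpos : 0 < ‖v‖ := (norm_nonneg v).lt_of_ne (Ne.symm hz)
        nlinarith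
    -- step B : ‖T p - b‖ ≤ ‖f - p‖_disc + ‖e‖_w
    have hE : Real.sqrt ((1 / (M : ℝ)) * ∑ i, w (y i) * ‖e i‖ ^ 2)
        = ‖sampVec (fun i => (c i : ℂ) * e i)‖ := by
      rw [← hkey (fun i => e i), Real.sqrt_sq (norm_nonneg _)]
    have hTpb : T p - b = T (p - f) - sampVec (fun i => (c i : ℂ) * e i) := by
      rw [hb, hT, sampT_eq, sampT_eq, sampVec_sub, sampVec_sub]
      refine congrArg sampVec ?_
      funext i
      simp only [Pi.sub_apply]
      ring
    have hfp : discNorm w y (f - p) = ‖T (p - f)‖ := by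
      rw [hdisc, show f - p = -(p - f) from (neg_sub p f).symm, map_neg, norm_neg]
    have hB : ‖T p - b‖ ≤ discNorm w y (f - p)
        + Real.sqrt ((1 / (M : ℝ)) * ∑ i, w (y i) * ‖e i‖ ^ 2) := by
      rw [hTpb, hE, hfp]
      exact norm_sub_le _ _
    -- stability applied to p - ftilde
    have hpf : L2Norm τ (p - ftilde) ≤ α⁻¹ * discNorm w y (p - ftilde) := by
      have h := hstab _ (P.sub_mem hp hft)
      have h' := mul_le_mul_of_nonneg_left h (inv_nonneg.2 hα.le)
      calc L2Norm τ (p - ftilde) = α⁻¹ * (α * L2Norm τ (p - ftilde)) := by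
            field_simp
        _ ≤ α⁻¹ * discNorm w y (p - ftilde) := h'
    have hdpf : discNorm w y (p - ftilde) ≤ discNorm w y (f - p)
        + Real.sqrt ((1 / (M : ℝ)) * ∑ i, w (y i) * ‖e i‖ ^ 2) := by
      rw [hdisc, map_sub]
      exact le_trans hA hB
    have htri' := htri (f - p) (p - ftilde) (hf.sub (hP p hp)) ((hP p hp).sub (hP ftilde hft))
    rw [sub_add_sub_cancel] at htri'
    have hinv : 0 ≤ α⁻¹ := inv_nonneg.2 hα.le
    have hpf2 : L2Norm τ (p - ftilde) ≤ α⁻¹ * discNorm w y (f - p)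
        + α⁻¹ * Real.sqrt ((1 / (M : ℝ)) * ∑ i, w (y i) * ‖e i‖ ^ 2) := by
      calc L2Norm τ (p - ftilde) ≤ α⁻¹ * discNorm w y (p - ftilde) := hpf
        _ ≤ α⁻¹ * (discNorm w y (f - p)
            + Real.sqrt ((1 / (M : ℝ)) * ∑ i, w (y i) * ‖e i‖ ^ 2)) :=
          mul_le_mul_of_nonneg_left hdpf hinv
        _ = _ := by ring
    linarith only [htri', hpf2]
end
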